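/- arXiv:1806.05423 — 3 statements merged into one kernel-verified Lean document; each statement's English description precedes it below -/
import Mathlib

section
/- Let T : [1, ∞) → (0, ∞) be nondecreasing, logarithmically convex, with T(r) → ∞, and suppose limsup_{r→∞} (log T(r))/r = 0. Then for every h > 0 and every ε > 0 there exists a set E ⊆ [1, ∞) of zero upper density such that T(r + h) ≤ (1 + ε) T(r) for all sufficiently large r ∉ E. -/
/-!
Put `u = log T` and `δ = log (1 + ε) / h`. The exceptional set is where the slope of `u` over
`[r, r + h]` is at least `δ`. By Markov's inequality its measure inside `[1, r]` is at most
`δ⁻¹ ∫₁ʳ slope u t (t + h) dt`, and this integral telescopes to at most `u (r + h) - u 1`.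
Since `u r / r → 0` (the limsup hypothesis bounds it above, monotonicity bounds it below),
the exceptional set has zero density.
-/

open Filter MeasureTheory Set Topology

theorem MonotoneOn.mul_volume_slope_ge_le {f : ℝ → ℝ} {a b c δ : ℝ}
    (hf : MonotoneOn f (Icc a (b + c))) (hab : a ≤ b) (hc : 0 ≤ c) :
    δ * volume.real ({x | δ ≤ slope f x (x + c)} ∩ Icc a b) ≤ f (b + c) - f a := by
  have hslope_nonneg : 0 ≤ᵐ[volume.restrict (Icc a b)] fun x => slope f x (x + c) := by
    refine ae_restrict_of_forall_mem measurableSet_Icc fun x hx => ?_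
    change 0 ≤ slope f x (x + c)
    rw [slope_def_field, add_sub_cancel_left]
    exact div_nonneg (sub_nonneg.2 (hf ⟨hx.1, by linarith [hx.2]⟩
      ⟨by linarith [hx.1], by linarith [hx.2]⟩ (by linarith))) hc
  have hint : Integrable (fun x => slope f x (x + c)) (volume.restrict (Icc a b)) := by
    rw [← IntegrableOn, integrableOn_Icc_iff_integrableOn_Ioc]
    exact (hf.intervalIntegrable_slope hab hc).1
  calc δ * volume.real ({x | δ ≤ slope f x (x + c)} ∩ Icc a b)
      = δ * (volume.restrict (Icc a b)).real {x | δ ≤ slope f x (x + c)} := by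
        rw [measureReal_def, measureReal_def, Measure.restrict_apply' measurableSet_Icc]
    _ ≤ ∫ x in Icc a b, slope f x (x + c) := mul_meas_ge_le_integral_of_nonneg hslope_nonneg hint δ
    _ = ∫ x in a..b, slope f x (x + c) := by
        rw [integral_Icc_eq_integral_Ioc, intervalIntegral.integral_of_le hab]
    _ ≤ f (b + c) - f a := hf.intervalIntegral_slope_le hab hc

theorem tendsto_comp_add_div_atTop {f : ℝ → ℝ} (hf : Tendsto (fun r => f r / r) atTop (𝓝 0))
    (c : ℝ) : Tendsto (fun r => f (r + c) / r) atTop (𝓝 0) := by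
  have hshift : Tendsto (fun r => f (r + c) / (r + c)) atTop (𝓝 0) :=
    hf.comp (tendsto_atTop_add_const_right _ c tendsto_id)
  have hratio : Tendsto (fun r : ℝ => 1 + c / r) atTop (𝓝 1) := by
    simpa using tendsto_const_nhds.add ((tendsto_const_nhds (x := c)).div_atTop tendsto_id)
  rw [← mul_one 0]
  refine (hshift.mul hratio).congr' ?_
  filter_upwards [eventually_gt_atTop 0, eventually_gt_atTop (-c)] with r hr hrc
  have : r + c ≠ 0 := by linarith
  field_simp

theorem MonotoneOn.tendsto_div_atTop_of_limsup_nonpos {f : ℝ → ℝ} {a : ℝ}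
    (hf : MonotoneOn f (Ici a)) (hlimsup : limsup (fun r => ((f r / r : ℝ) : EReal)) atTop ≤ 0) :
    Tendsto (fun r => f r / r) atTop (𝓝 0) := by
  refine tendsto_order.2 ⟨fun b hb => ?_, fun b hb => ?_⟩
  · filter_upwards [((tendsto_const_nhds (x := f a)).div_atTop tendsto_id).eventually_const_lt hb,
      eventually_ge_atTop a, eventually_gt_atTop 0] with r hlt hr hr0
    exact hlt.trans_le (div_le_div_of_nonneg_right (hf self_mem_Ici hr hr) hr0.le)
  · have := eventually_lt_of_limsup_lt (hlimsup.trans_lt (EReal.coe_lt_coe_iff.2 hb))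
    filter_upwards [this] with r hr using EReal.coe_lt_coe_iff.1 hr

theorem MonotoneOn.tendsto_volume_slope_ge_div_atTop {f : ℝ → ℝ} {a c δ : ℝ}
    (hf : MonotoneOn f (Ici a)) (hc : 0 ≤ c) (hδ : 0 < δ)
    (hgrowth : Tendsto (fun r => f r / r) atTop (𝓝 0)) :
    Tendsto (fun r => volume.real ({x | δ ≤ slope f x (x + c)} ∩ Icc a r) / r) atTop (𝓝 0) := by
  have hbound : Tendsto (fun r => δ⁻¹ * (f (r + c) / r - f a / r)) atTop (𝓝 0) := by
    simpa using ((tendsto_comp_add_div_atTop hgrowth c).sub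
      (tendsto_const_nhds.div_atTop tendsto_id)).const_mul δ⁻¹
  refine tendsto_of_tendsto_of_tendsto_of_le_of_le' tendsto_const_nhds hbound ?_ ?_
  · filter_upwards [eventually_gt_atTop 0] with r hr
    exact div_nonneg measureReal_nonneg hr.le
  · filter_upwards [eventually_ge_atTop a, eventually_gt_atTop 0] with r hr hr0
    have := (hf.mono Icc_subset_Ici_self).mul_volume_slope_ge_le (δ := δ) hr hc
    rw [← sub_div, le_inv_mul_iff₀ hδ, mul_div_assoc']
    exact div_le_div_of_nonneg_right this hr0.le

theorem le_one_add_mul_of_log_sub_log_lt {x y ε : ℝ} (hx : 0 < x) (hy : 0 < y) (hε : -1 < ε)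
    (hlog : Real.log y - Real.log x < Real.log (1 + ε)) : y ≤ (1 + ε) * x := by
  rw [sub_lt_iff_lt_add, ← Real.log_mul (by linarith) hx.ne'] at hlog
  exact ((Real.log_lt_log_iff hy (mul_pos (by linarith) hx)).1 hlog).le

theorem translate_growth_of_minimal_type_general (T : ℝ → ℝ)
    (hpos : ∀ r ≥ 1, 0 < T r) (hmono : MonotoneOn T (Set.Ici 1))
    (hgrowth : Filter.limsup (fun r => ((Real.log (T r) / r : ℝ) : EReal)) atTop = 0) :
    ∀ h > (0 : ℝ), ∀ ε > (0 : ℝ),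
      ∃ E : Set ℝ, E ⊆ Set.Ici 1 ∧ MeasurableSet E ∧
        Filter.limsup (fun r => (((volume (E ∩ Set.Icc 1 r)).toReal / r : ℝ) : EReal))
          atTop = 0 ∧
        ∀ᶠ r in atTop, r ∉ E → T (r + h) ≤ (1 + ε) * T r := by
  intro h hh ε hε
  -- clamping at `1` makes `u` monotone, hence measurable, on all of `ℝ`
  set u : ℝ → ℝ := fun t => Real.log (T (max t 1))
  have hu : Monotone u := fun a b hab =>
    Real.log_le_log (hpos _ (le_max_right _ _))
      (hmono (le_max_right a 1) (le_max_right b 1) (max_le_max hab le_rfl))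
  have hlog_eq : ∀ r ≥ 1, u r = Real.log (T r) := fun r hr => by simp [u, max_eq_left hr]
  have hu_growth : Tendsto (fun r => u r / r) atTop (𝓝 0) :=
    (hu.monotoneOn (Ici 1)).tendsto_div_atTop_of_limsup_nonpos <| hgrowth ▸ (limsup_congr <| by
      filter_upwards [eventually_ge_atTop 1] with r hr
      rw [hlog_eq r hr]).le
  set δ := Real.log (1 + ε) / h
  have hδ : 0 < δ := div_pos (Real.log_pos (by linarith)) hh
  have hslope_meas : Measurable fun x => slope u x (x + h) := by
    simp only [slope_def_field, add_sub_cancel_left]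
    exact ((hu.measurable.comp (measurable_add_const h)).sub hu.measurable).div_const h
  refine ⟨{x | δ ≤ slope u x (x + h)} ∩ Ici 1, inter_subset_right,
    (measurableSet_le measurable_const hslope_meas).inter measurableSet_Ici, ?_, ?_⟩
  · have := (hu.monotoneOn (Ici 1)).tendsto_volume_slope_ge_div_atTop hh.le hδ hu_growth
    rw [← EReal.coe_zero]
    simp_rw [inter_assoc, inter_eq_right.2 Icc_subset_Ici_self]
    exact ((continuous_coe_real_ereal.tendsto 0).comp this).limsup_eq
  · filter_upwards [eventually_ge_atTop 1] with r hr hrE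
    have hslope : slope u r (r + h) < δ := not_le.1 fun hle => hrE ⟨hle, hr⟩
    rw [slope_def_field, add_sub_cancel_left, div_lt_div_iff_of_pos_right hh,
      hlog_eq r hr, hlog_eq (r + h) (by linarith)] at hslope
    exact le_one_add_mul_of_log_sub_log_lt (hpos r hr) (hpos _ (by linarith)) (by linarith) hslope

/-- If `T : [1,∞) → (0,∞)` is nondecreasing, logarithmically convex, `T(r) → ∞`, and
`limsup (log T r)/r = 0`, then for every `h > 0` and `ε > 0` there is a set `E ⊆ [1,∞)`
of zero upper density with `T(r + h) ≤ (1 + ε) T(r)` for all sufficiently large `r ∉ E`. -/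
theorem translate_growth_of_minimal_type (T : ℝ → ℝ)
    (hpos : ∀ r ≥ 1, 0 < T r) (hmono : MonotoneOn T (Set.Ici 1))
    (hconv : ConvexOn ℝ (Set.Ici 0) (fun s => Real.log (T (Real.exp s))))
    (htop : Filter.Tendsto T atTop atTop)
    (hgrowth : Filter.limsup (fun r => ((Real.log (T r) / r : ℝ) : EReal)) atTop = 0) :
    ∀ h > (0 : ℝ), ∀ ε > (0 : ℝ),
      ∃ E : Set ℝ, E ⊆ Set.Ici 1 ∧ MeasurableSet E ∧
        Filter.limsup (fun r => (((volume (E ∩ Set.Icc 1 r)).toReal / r : ℝ) : EReal))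
          atTop = 0 ∧
        ∀ᶠ r in atTop, r ∉ E → T (r + h) ≤ (1 + ε) * T r :=
  translate_growth_of_minimal_type_general T hpos hmono hgrowth
end

section
/- Let p(r) and h(r) = φ(r)/r be positive nondecreasing functions defined for r ≥ ϱ > 0 and r ≥ τ > 0 respectively, such that ∫_ϱ^∞ dr/p(r) = ∞ and ∫_τ^∞ dr/φ(r) < ∞. Let u(r) be a positive nondecreasing function defined for r ≥ r₀ ≥ ϱ with u(r) → ∞ as r → ∞. Then for every real C > 1, the inequality u(r + p(r)/h(u(r))) < C·u(r) holds for all r ≥ r₀ with u(r) > τ, outside an exceptional set E satisfying ∫_E dr/p(r) ≤ 1/h(w) + (C/(C−1)) ∫_w^∞ dr/φ(r) < ∞, where w = max{τ, u(r₀)}. -/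
open Filter MeasureTheory Set

/-!
Split the exceptional set into the levels on which `C^k w ≤ u(r) < C^(k+1) w`. On one level,
two exceptional points `r' < r` cannot be farther apart than `p(r')/h(C^k w)`, since otherwise
monotonicity of `u` would push `u(r)` up to `C u(r') ≥ C^(k+1) w`. So the whole level lies in
one interval whose `dr/p`-measure is at most `1/h(C^k w)`. Finally
`1/h(C^(k+1) w) ≤ C/(C-1) ∫_{C^k w}^{C^(k+1) w} dr/φ(r)` because `φ` is nondecreasing.
-/

def exceptionalLevel (p h u : ℝ → ℝ) (r₀ C V : ℝ) : Set ℝ :=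
  {r | r₀ ≤ r ∧ V ≤ u r ∧ u r < C * V ∧ C * u r ≤ u (r + p r / h (u r))}

section Cover

variable {p : ℝ → ℝ} {ϱ : ℝ} {S : Set ℝ}

theorem exists_mem_lt_csInf_add_and_lt_csInf_image_add (hp_mono : MonotoneOn p (Ici ϱ))
    (hS : S ⊆ Ici ϱ) (hne : S.Nonempty) {ε δ : ℝ} (hε : 0 < ε)
    (hδ : 0 < δ) : ∃ r ∈ S, r < sInf S + ε ∧ p r < sInf (p '' S) + δ := by
  obtain ⟨r₁, hr₁, hr₁_lt⟩ := exists_lt_of_csInf_lt hne (lt_add_of_pos_right (sInf S) hε)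
  obtain ⟨_, ⟨r₂, hr₂, rfl⟩, hr₂_lt⟩ :=
    exists_lt_of_csInf_lt (hne.image p) (lt_add_of_pos_right (sInf (p '' S)) hδ)
  have hmin : min r₁ r₂ ∈ S := by rcases min_choice r₁ r₂ with h | h <;> rw [h] <;> assumption
  exact ⟨min r₁ r₂, hmin, (min_le_left _ _).trans_lt hr₁_lt,
    (hp_mono (hS hmin) (hS hr₂) (min_le_right _ _)).trans_lt hr₂_lt⟩

theorem exists_superset_lintegral_inv_le {H : ℝ} (hH : 0 < H) (hp_pos : 0 < p ϱ)
    (hp_mono : MonotoneOn p (Ici ϱ)) (hS : S ⊆ Ici ϱ)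
    (hspread : ∀ r ∈ S, ∀ r' ∈ S, r ≤ r' + p r' / H) :
    ∃ I, MeasurableSet I ∧ S ⊆ I ∧
      ∫⁻ r in I, ENNReal.ofReal (1 / p r) ≤ ENNReal.ofReal (1 / H) := by
  rcases S.eq_empty_or_nonempty with rfl | hne
  · exact ⟨∅, .empty, subset_rfl, by simp⟩
  set t := sInf S
  -- not `p t`, which is too small to cover `S` when `p` jumps at `t ∉ S`
  set a := sInf (p '' S)
  have hp_ge : ∀ r ∈ S, p ϱ ≤ p r := fun r hr => hp_mono self_mem_Ici (hS hr) (hS hr)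
  have hbdd_p : BddBelow (p '' S) := ⟨p ϱ, forall_mem_image.2 hp_ge⟩
  have ha : 0 < a := hp_pos.trans_le (le_csInf (hne.image p) (forall_mem_image.2 hp_ge))
  have ha_le : ∀ x, t < x → a ≤ p x := fun x hx => by
    obtain ⟨r, hr, hrx⟩ := exists_lt_of_csInf_lt hne hx
    exact (csInf_le hbdd_p (mem_image_of_mem p hr)).trans
      (hp_mono (hS hr) (mem_Ici.2 ((hS hr).out.trans hrx.le)) hrx.le)
  refine ⟨Icc t (t + a / H), measurableSet_Icc, fun r hr => ⟨csInf_le ⟨ϱ, hS⟩ hr, ?_⟩, ?_⟩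
  · refine le_of_forall_pos_lt_add fun ε hε => ?_
    obtain ⟨r', hr', hr't, hr'a⟩ := exists_mem_lt_csInf_add_and_lt_csInf_image_add hp_mono hS hne
      (half_pos hε) (mul_pos hH (half_pos hε))
    calc r ≤ r' + p r' / H := hspread r hr r' hr'
      _ < t + ε / 2 + (a + H * (ε / 2)) / H := by gcongr
      _ = t + a / H + ε := by field_simp; ring
  · calc ∫⁻ r in Icc t (t + a / H), ENNReal.ofReal (1 / p r)
        = ∫⁻ r in Ioc t (t + a / H), ENNReal.ofReal (1 / p r) :=
          setLIntegral_congr Ioc_ae_eq_Icc.symm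
      _ ≤ ∫⁻ _ in Ioc t (t + a / H), ENNReal.ofReal (1 / a) :=
          setLIntegral_mono measurable_const fun x hx =>
            ENNReal.ofReal_le_ofReal (one_div_le_one_div_of_le ha (ha_le x hx.1))
      _ = ENNReal.ofReal (1 / H) := by
          rw [setLIntegral_const, Real.volume_Ioc, ← ENNReal.ofReal_mul (by positivity)]
          congr 1
          field_simp
          ring

end Cover

theorem exceptionalLevel_spread {p h u : ℝ → ℝ} {τ r₀ C V : ℝ} (hC : 0 ≤ C) (hτV : τ ≤ V)
    (hp_nonneg : ∀ r ≥ r₀, 0 ≤ p r) (hh_pos : ∀ r ≥ τ, 0 < h r)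
    (hh_mono : MonotoneOn h (Ici τ)) (hu_mono : MonotoneOn u (Ici r₀)) :
    ∀ r ∈ exceptionalLevel p h u r₀ C V, ∀ r' ∈ exceptionalLevel p h u r₀ C V,
      r ≤ r' + p r' / h V := by
  rintro r ⟨hr₀r, -, hr_lt, -⟩ r' ⟨hr₀r', hVr', -, hr'_growth⟩
  by_contra! hfar
  have hτr' : τ ≤ u r' := hτV.trans hVr'
  have hstep : p r' / h (u r') ≤ p r' / h V :=
    div_le_div_of_nonneg_left (hp_nonneg r' hr₀r') (hh_pos V hτV) (hh_mono hτV hτr' hVr')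
  have hjump_nonneg : 0 ≤ p r' / h (u r') :=
    div_nonneg (hp_nonneg r' hr₀r') (hh_pos _ hτr').le
  have : C * V ≤ u r := calc
    C * V ≤ C * u r' := mul_le_mul_of_nonneg_left hVr' hC
    _ ≤ u (r' + p r' / h (u r')) := hr'_growth
    _ ≤ u r := hu_mono (mem_Ici.2 (by linarith)) (mem_Ici.2 hr₀r) (by linarith)
  linarith

theorem exists_mem_exceptionalLevel {p h u : ℝ → ℝ} {r₀ C w r : ℝ} (hC : 1 < C) (hw : 0 < w)
    (hr : r₀ ≤ r) (hwr : w ≤ u r) (hgrowth : C * u r ≤ u (r + p r / h (u r))) :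
    ∃ k : ℕ, r ∈ exceptionalLevel p h u r₀ C (C ^ k * w) := by
  obtain ⟨k, hk_le, hk_lt⟩ := exists_nat_pow_near ((one_le_div hw).2 hwr) hC
  rw [le_div_iff₀ hw] at hk_le
  rw [div_lt_iff₀ hw, pow_succ, mul_comm _ C, mul_assoc] at hk_lt
  exact ⟨k, hr, hk_le, hk_lt, hgrowth⟩

theorem ofReal_div_le_lintegral_Ico {φ : ℝ → ℝ} {a b : ℝ} (hab : a ≤ b) (ha : 0 < φ a)
    (hφ : MonotoneOn φ (Icc a b)) :
    ENNReal.ofReal ((b - a) / φ b) ≤ ∫⁻ s in Ico a b, ENNReal.ofReal (1 / φ s) := by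
  have hφ_le : ∀ s ∈ Ico a b, φ s ≤ φ b := fun s hs =>
    hφ (Ico_subset_Icc_self hs) (right_mem_Icc.2 hab) hs.2.le
  have hφ_pos : ∀ s ∈ Icc a b, 0 < φ s := fun s hs => ha.trans_le (hφ (left_mem_Icc.2 hab) hs hs.1)
  calc ENNReal.ofReal ((b - a) / φ b) = ∫⁻ _ in Ico a b, ENNReal.ofReal (1 / φ b) := by
        rw [setLIntegral_const, Real.volume_Ico,
          ← ENNReal.ofReal_mul (one_div_pos.2 (hφ_pos b (right_mem_Icc.2 hab))).le]
        ring_nf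
    _ ≤ _ := setLIntegral_mono' measurableSet_Ico fun s hs => ENNReal.ofReal_le_ofReal
        (one_div_le_one_div_of_le (hφ_pos s (Ico_subset_Icc_self hs)) (hφ_le s hs))

theorem ofReal_div_le_mul_lintegral_Ico {φ : ℝ → ℝ} {C a : ℝ} (hC : 1 < C) (ha : 0 < a)
    (hφa : 0 < φ a) (hφ : MonotoneOn φ (Icc a (C * a))) :
    ENNReal.ofReal (C * a / φ (C * a))
      ≤ ENNReal.ofReal (C / (C - 1)) * ∫⁻ s in Ico a (C * a), ENNReal.ofReal (1 / φ s) := by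
  have hC₁ : 0 < C - 1 := sub_pos.2 hC
  have hCa : C * a = C / (C - 1) * (C * a - a) := by field_simp
  rw [hCa, mul_div_assoc, ENNReal.ofReal_mul (by positivity), ← hCa]
  gcongr
  exact ofReal_div_le_lintegral_Ico (le_mul_of_one_le_left ha.le hC.le) hφa hφ

theorem monotoneOn_of_div_self_monotoneOn {φ h : ℝ → ℝ} {w : ℝ} (hw : 0 < w)
    (hh_def : ∀ r ≥ w, h r = φ r / r) (hh_pos : ∀ r ≥ w, 0 < h r)
    (hh_mono : MonotoneOn h (Ici w)) : MonotoneOn φ (Ici w) := fun s hs s' hs' hss' => by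
  rw [← div_mul_cancel₀ (φ s) (hw.trans_le hs).ne', ← div_mul_cancel₀ (φ s') (hw.trans_le hs').ne',
    ← hh_def s hs, ← hh_def s' hs']
  exact mul_le_mul (hh_mono hs hs' hss') hss' (hw.trans_le hs).le (hh_pos s' hs').le

theorem tsum_ofReal_inv_geometric_le {φ h : ℝ → ℝ} {C w : ℝ} (hC : 1 < C) (hw : 0 < w)
    (hh_def : ∀ r ≥ w, h r = φ r / r) (hh_pos : ∀ r ≥ w, 0 < h r)
    (hh_mono : MonotoneOn h (Ici w)) :
    ∑' k : ℕ, ENNReal.ofReal (1 / h (C ^ k * w))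
      ≤ ENNReal.ofReal (1 / h w)
        + ENNReal.ofReal (C / (C - 1)) * ∫⁻ s in Ici w, ENNReal.ofReal (1 / φ s) := by
  set V : ℕ → ℝ := fun k => C ^ k * w
  have hV_mono : Monotone V := (pow_right_mono₀ hC.le).mul_const hw.le
  have hV_ge : ∀ k, w ≤ V k := fun k => le_mul_of_one_le_left hw.le (one_le_pow₀ hC.le)
  have hφ_mono := monotoneOn_of_div_self_monotoneOn hw hh_def hh_pos hh_mono
  have hterm : ∀ k, ENNReal.ofReal (1 / h (V (k + 1)))
      ≤ ENNReal.ofReal (C / (C - 1)) * ∫⁻ s in Ico (V k) (V (k + 1)), ENNReal.ofReal (1 / φ s) := by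
    intro k
    have hV_succ : V (k + 1) = C * V k := by simp only [V, pow_succ]; ring
    have hφ_pos : 0 < φ (V k) := by
      have := hh_pos _ (hV_ge k)
      rwa [hh_def _ (hV_ge k), div_pos_iff_of_pos_right (hw.trans_le (hV_ge k))] at this
    rw [hh_def _ (hV_ge _), one_div_div, hV_succ]
    exact ofReal_div_le_mul_lintegral_Ico hC (hw.trans_le (hV_ge k)) hφ_pos
      (hφ_mono.mono (Icc_subset_Ici_self.trans (Ici_subset_Ici.2 (hV_ge k))))
  have hdisj : Pairwise (Function.onFun Disjoint fun k => Ico (V k) (V (k + 1))) := by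
    simpa only [Order.succ_eq_add_one] using hV_mono.pairwise_disjoint_on_Ico_succ
  rw [tsum_eq_zero_add' ENNReal.summable, pow_zero, one_mul]
  gcongr
  calc ∑' k, ENNReal.ofReal (1 / h (V (k + 1)))
      ≤ ∑' k, ENNReal.ofReal (C / (C - 1)) *
          ∫⁻ s in Ico (V k) (V (k + 1)), ENNReal.ofReal (1 / φ s) := ENNReal.tsum_le_tsum hterm
    _ = ENNReal.ofReal (C / (C - 1)) * ∫⁻ s in ⋃ k, Ico (V k) (V (k + 1)),
          ENNReal.ofReal (1 / φ s) := by
        rw [ENNReal.tsum_mul_left, lintegral_iUnion (fun _ => measurableSet_Ico) hdisj]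
    _ ≤ _ := by
        gcongr
        exact iUnion_subset fun k => Ico_subset_Ici_self.trans (Ici_subset_Ici.2 (hV_ge k))

theorem hinkkanen_borel_growth_lemma_general (p φ h u : ℝ → ℝ) (ϱ τ r₀ : ℝ)
    (hτ : 0 < τ) (hr₀ : ϱ ≤ r₀)
    (hp_pos : ∀ r ≥ ϱ, 0 < p r) (hp_mono : MonotoneOn p (Set.Ici ϱ))
    (hh_def : ∀ r ≥ τ, h r = φ r / r)
    (hh_pos : ∀ r ≥ τ, 0 < h r) (hh_mono : MonotoneOn h (Set.Ici τ))
    (hφ_int : (∫⁻ r in Set.Ici τ, ENNReal.ofReal (1 / φ r)) < ⊤)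
    (hu_mono : MonotoneOn u (Set.Ici r₀)) :
    ∀ C : ℝ, 1 < C →
      ∃ E : Set ℝ, MeasurableSet E ∧
        (∫⁻ r in E, ENNReal.ofReal (1 / p r))
          ≤ ENNReal.ofReal (1 / h (max τ (u r₀)))
            + ENNReal.ofReal (C / (C - 1))
              * ∫⁻ r in Set.Ici (max τ (u r₀)), ENNReal.ofReal (1 / φ r) ∧
        (∫⁻ r in E, ENNReal.ofReal (1 / p r)) < ⊤ ∧
        ∀ r, r₀ ≤ r → τ < u r → r ∉ E → u (r + p r / h (u r)) < C * u r := by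
  intro C hC
  set w := max τ (u r₀)
  have hτw : τ ≤ w := le_max_left _ _
  have hw : 0 < w := hτ.trans_le hτw
  have hV : ∀ k : ℕ, τ ≤ C ^ k * w := fun k =>
    hτw.trans (le_mul_of_one_le_left hw.le (one_le_pow₀ hC.le))
  choose I hI_meas hI_sub hI_int using fun k : ℕ =>
    exists_superset_lintegral_inv_le (hh_pos _ (hV k)) (hp_pos ϱ le_rfl) hp_mono
      (fun r hr => mem_Ici.2 (hr₀.trans hr.1))
      (exceptionalLevel_spread (C := C) (V := C ^ k * w) (by linarith) (hV k)
        (fun r hr => (hp_pos r (hr₀.trans hr)).le) hh_pos hh_mono hu_mono)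
  have hbound : ∫⁻ r in ⋃ k, I k, ENNReal.ofReal (1 / p r)
      ≤ ENNReal.ofReal (1 / h w)
        + ENNReal.ofReal (C / (C - 1)) * ∫⁻ r in Ici w, ENNReal.ofReal (1 / φ r) := calc
    _ ≤ ∑' k, ∫⁻ r in I k, ENNReal.ofReal (1 / p r) := lintegral_iUnion_le _ _
    _ ≤ ∑' k : ℕ, ENNReal.ofReal (1 / h (C ^ k * w)) := ENNReal.tsum_le_tsum hI_int
    _ ≤ _ := tsum_ofReal_inv_geometric_le hC hw (fun r hr => hh_def r (hτw.trans hr))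
        (fun r hr => hh_pos r (hτw.trans hr)) (hh_mono.mono (Ici_subset_Ici.2 hτw))
  have hfinite : ∫⁻ r in Ici w, ENNReal.ofReal (1 / φ r) < ⊤ :=
    (lintegral_mono_set (Ici_subset_Ici.2 hτw)).trans_lt hφ_int
  refine ⟨⋃ k, I k, .iUnion hI_meas, hbound, hbound.trans_lt (ENNReal.add_lt_top.2
    ⟨ENNReal.ofReal_lt_top, ENNReal.mul_lt_top ENNReal.ofReal_lt_top hfinite⟩), ?_⟩
  intro r hr hτr hrE
  by_contra! hgrowth
  have hwr : w ≤ u r := max_le hτr.le (hu_mono self_mem_Ici hr hr)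
  obtain ⟨k, hk⟩ := exists_mem_exceptionalLevel hC hw hr hwr hgrowth
  exact hrE (mem_iUnion.2 ⟨k, hI_sub k hk⟩)

/-- Hinkkanen's Borel-type growth lemma. Let `p` and `h = φ/r` be positive nondecreasing
functions on `[ϱ,∞)` and `[τ,∞)` respectively, with `∫_ϱ^∞ dr/p(r) = ∞` and
`∫_τ^∞ dr/φ(r) < ∞`, and let `u` be positive nondecreasing on `[r₀,∞)` with `u(r) → ∞`.
Then for every `C > 1`, `u(r + p(r)/h(u(r))) < C u(r)` holds for all `r ≥ r₀` with
`u(r) > τ` outside a set `E` with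
`∫_E dr/p(r) ≤ 1/h(w) + (C/(C-1)) ∫_w^∞ dr/φ(r) < ∞`, where `w = max{τ, u(r₀)}`. -/
theorem hinkkanen_borel_growth_lemma (p φ h u : ℝ → ℝ) (ϱ τ r₀ : ℝ)
    (hϱ : 0 < ϱ) (hτ : 0 < τ) (hr₀ : ϱ ≤ r₀)
    (hp_pos : ∀ r ≥ ϱ, 0 < p r) (hp_mono : MonotoneOn p (Set.Ici ϱ))
    (hh_def : ∀ r ≥ τ, h r = φ r / r)
    (hh_pos : ∀ r ≥ τ, 0 < h r) (hh_mono : MonotoneOn h (Set.Ici τ))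
    (hp_int : (∫⁻ r in Set.Ici ϱ, ENNReal.ofReal (1 / p r)) = ⊤)
    (hφ_int : (∫⁻ r in Set.Ici τ, ENNReal.ofReal (1 / φ r)) < ⊤)
    (hu_pos : ∀ r ≥ r₀, 0 < u r) (hu_mono : MonotoneOn u (Set.Ici r₀))
    (hu_top : Filter.Tendsto u atTop atTop) :
    ∀ C : ℝ, 1 < C →
      ∃ E : Set ℝ, MeasurableSet E ∧
        (∫⁻ r in E, ENNReal.ofReal (1 / p r))
          ≤ ENNReal.ofReal (1 / h (max τ (u r₀)))
            + ENNReal.ofReal (C / (C - 1))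
              * ∫⁻ r in Set.Ici (max τ (u r₀)), ENNReal.ofReal (1 / φ r) ∧
        (∫⁻ r in E, ENNReal.ofReal (1 / p r)) < ⊤ ∧
        ∀ r, r₀ ≤ r → τ < u r → r ∉ E → u (r + p r / h (u r)) < C * u r :=
  hinkkanen_borel_growth_lemma_general p φ h u ϱ τ r₀ hτ hr₀ hp_pos hp_mono hh_def hh_pos hh_mono
    hφ_int hu_mono
end

section
/- Let u : [r₀, ∞) → (0, ∞) be nondecreasing with u(r) → ∞, and suppose limsup_{r→∞} (log u(r))·(log r)^ε / r = 0 for some ε > 0, and limsup_{r→∞} (log log u(r))/(log r) ≤ 1. Then r·log r / (log u(r)·(log log u(r))^{1+ε}) → ∞ as r → ∞. -/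
open Filter Topology Real

/-!
Write `B = log r`, `L = log u(r)` and `M = log log u(r)`. The first hypothesis says that
`L B^ε / r` tends to `0` from above, so `r / (L B^ε) → ∞`; the second gives `M < 2B`
eventually.
Hence `r B / (L M^{1+ε}) ≥ 2^{-(1+ε)} · r / (L B^ε) → ∞`.
-/

theorem tendsto_nhdsGT_zero_of_limsup_coe_le_zero {α : Type*} {l : Filter α} {f : α → ℝ}
    (hpos : ∀ᶠ x in l, 0 < f x) (h : limsup (fun x => (f x : EReal)) l ≤ 0) :
    Tendsto f l (𝓝[>] 0) := by
  refine tendsto_nhdsWithin_iff.2 ⟨tendsto_order.2 ⟨fun a ha => ?_, fun a ha => ?_⟩, hpos⟩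
  · filter_upwards [hpos] with x hx using ha.trans hx
  · have hlt : limsup (fun x => (f x : EReal)) l < (a : EReal) :=
      h.trans_lt (EReal.coe_lt_coe_iff.2 ha)
    filter_upwards [eventually_lt_of_limsup_lt hlt] with x hx using EReal.coe_lt_coe_iff.1 hx

theorem eventually_lt_mul_of_limsup_coe_div_lt {α : Type*} {l : Filter α} {f g : α → ℝ}
    {c : ℝ}
    (hg : ∀ᶠ x in l, 0 < g x) (h : limsup (fun x => ((f x / g x : ℝ) : EReal)) l < c) :
    ∀ᶠ x in l, f x < c * g x := by
  filter_upwards [eventually_lt_of_limsup_lt h, hg] with x hx hgx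
  exact (div_lt_iff₀ hgx).1 (EReal.coe_lt_coe_iff.1 hx)

theorem inv_rpow_mul_div_le_div_mul_rpow {r B L M K ε : ℝ} (hr : 0 ≤ r) (hB : 0 < B)
    (hL : 0 < L) (hM : 0 < M) (hMB : M ≤ K * B) (hε : 0 ≤ 1 + ε) :
    (K ^ (1 + ε))⁻¹ * (r / (L * B ^ ε)) ≤ r * B / (L * M ^ (1 + ε)) := by
  have hK : 0 < K := pos_of_mul_pos_left (hM.trans_le hMB) hB.le
  have hKB : (K * B) ^ (1 + ε) = K ^ (1 + ε) * (B * B ^ ε) := by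
    rw [mul_rpow hK.le hB.le, rpow_add hB, rpow_one, mul_comm B]
  calc (K ^ (1 + ε))⁻¹ * (r / (L * B ^ ε)) = r * B / (L * (K * B) ^ (1 + ε)) := by
        rw [hKB]
        field_simp
    _ ≤ r * B / (L * M ^ (1 + ε)) := by
        gcongr

theorem auxiliary_growth_quotient_tendsto_atTop_general (u : ℝ → ℝ) (ε : ℝ) (hε : 0 < ε)
    (hu_top : Filter.Tendsto u atTop atTop)
    (h1 : Filter.limsup
      (fun r => ((Real.log (u r) * Real.log r ^ ε / r : ℝ) : EReal)) atTop = 0)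
    (h2 : Filter.limsup
      (fun r => ((Real.log (Real.log (u r)) / Real.log r : ℝ) : EReal)) atTop
        ≤ (1 : EReal)) :
    Filter.Tendsto
      (fun r => r * Real.log r /
        (Real.log (u r) * Real.log (Real.log (u r)) ^ ((1 : ℝ) + ε)))
      atTop atTop := by
  have hL : Tendsto (fun r => log (u r)) atTop atTop := tendsto_log_atTop.comp hu_top
  have hM : Tendsto (fun r => log (log (u r))) atTop atTop := tendsto_log_atTop.comp hL
  have hB_pos : ∀ᶠ r : ℝ in atTop, 0 < log r := tendsto_log_atTop.eventually_gt_atTop 0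
  have hL_pos := hL.eventually_gt_atTop 0
  have hf_pos : ∀ᶠ r : ℝ in atTop, 0 < log (u r) * log r ^ ε / r := by
    filter_upwards [hL_pos, hB_pos, eventually_gt_atTop 0] with r hLr hBr hr
    positivity
  have hf : Tendsto (fun r => r / (log (u r) * log r ^ ε)) atTop atTop := by
    refine (tendsto_nhdsGT_zero_of_limsup_coe_le_zero hf_pos h1.le).inv_tendsto_nhdsGT_zero.congr
      fun r => ?_
    simp only [Pi.inv_apply, inv_div]
  have hMB : ∀ᶠ r : ℝ in atTop, log (log (u r)) < 2 * log r :=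
    eventually_lt_mul_of_limsup_coe_div_lt hB_pos (h2.trans_lt (by exact_mod_cast one_lt_two))
  refine tendsto_atTop_mono' atTop ?_
    (hf.const_mul_atTop (inv_pos.2 (rpow_pos_of_pos two_pos (1 + ε))))
  filter_upwards [hB_pos, hL_pos, hM.eventually_gt_atTop 0, hMB, eventually_ge_atTop 0]
    with r hBr hLr hMr hMBr hr
  exact inv_rpow_mul_div_le_div_mul_rpow hr hBr hLr hMr hMBr.le (by linarith)

/-- If `u : [r₀,∞) → (0,∞)` is nondecreasing with `u(r) → ∞`,
`limsup (log u(r))(log r)^ε / r = 0` for some `ε > 0`, and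
`limsup (log log u(r))/(log r) ≤ 1`, then
`r log r / (log u(r) (log log u(r))^{1+ε}) → ∞` as `r → ∞`. -/
theorem auxiliary_growth_quotient_tendsto_atTop (u : ℝ → ℝ) (r₀ ε : ℝ) (hε : 0 < ε)
    (hu_pos : ∀ r ≥ r₀, 0 < u r) (hu_mono : MonotoneOn u (Set.Ici r₀))
    (hu_top : Filter.Tendsto u atTop atTop)
    (h1 : Filter.limsup
      (fun r => ((Real.log (u r) * Real.log r ^ ε / r : ℝ) : EReal)) atTop = 0)
    (h2 : Filter.limsup
      (fun r => ((Real.log (Real.log (u r)) / Real.log r : ℝ) : EReal)) atTop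
        ≤ (1 : EReal)) :
    Filter.Tendsto
      (fun r => r * Real.log r /
        (Real.log (u r) * Real.log (Real.log (u r)) ^ ((1 : ℝ) + ε)))
      atTop atTop :=
  auxiliary_growth_quotient_tendsto_atTop_general u ε hε hu_top h1 h2
end
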